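/- Let G be a graph, v an outer vertex of G carrying a loop ℓ. Then v is still an outer vertex of G/ℓ, the graphs (G/ℓ)/v and G/v agree, and the triangle commutes: δ^ℓ ∘ δ^v = δ^v as graphical maps G/v → G. This composite graphical map is the inclusion on both edges and vertices. -/

import Mathlib

/-!  A formalization of the graphical category of finite (connected) multigraphs
with legs, loops and parallel edges, following the half-edge encoding:
a graph is given by a finite set of vertices, a finite set of half-edges,
an involution pairing the two halves of an edge (legs and free edges have a
fixed or unattached half), and an attachment map.  Graphical maps are encoded
by their action on (half-)edges together with the assignment of an embedded
subgraph (given by its vertex set and its ι-closed set of half-edges) to each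
vertex; `PreGMap.EqOn G f g` is equality of graphical maps out of `G`. -/

structure MGraph where
  V : Finset ℕ
  H : Finset ℕ
  ι : ℕ → ℕ
  att : ℕ → Option ℕ

namespace MGraph

/-- Two vertices are adjacent when some edge joins them. -/
def Adj (G : MGraph) (v w : ℕ) : Prop :=
  ∃ h ∈ G.H, G.att h = some v ∧ G.att (G.ι h) = some w

/-- Connectedness of a graph. -/
def Connected (G : MGraph) : Prop :=
  ∀ v ∈ G.V, ∀ w ∈ G.V, Relation.ReflTransGen G.Adj v w

/-- Well-formedness: the involution and the attachment are internal to the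
graph, and the graph is connected (graphs are finite connected multigraphs). -/
def Wf (G : MGraph) : Prop :=
  (∀ h ∈ G.H, G.ι h ∈ G.H) ∧
  (∀ h ∈ G.H, G.ι (G.ι h) = h) ∧
  (∀ h ∈ G.H, ∀ v, G.att h = some v → v ∈ G.V) ∧
  G.Connected

/-- `h` is (a half of) an inner edge: both ends are attached to vertices. -/
def IsInnerEdge (G : MGraph) (h : ℕ) : Prop :=
  h ∈ G.H ∧ h ≠ G.ι h ∧ (G.att h).isSome ∧ (G.att (G.ι h)).isSome

/-- `h` is (a half of) a loop: an edge from a vertex to itself. -/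
def IsLoop (G : MGraph) (h : ℕ) : Prop :=
  h ∈ G.H ∧ h ≠ G.ι h ∧ ∃ v, G.att h = some v ∧ G.att (G.ι h) = some v

/-- The number of non-leg edges incident to `v` (a loop counts once). -/
def nonLegEdgeCount (G : MGraph) (v : ℕ) : ℕ :=
  (G.H.filter fun h => G.att h = some v ∧ (G.att (G.ι h)).isSome ∧ G.att (G.ι h) ≠ some v).card +
  (G.H.filter fun h => G.att h = some v ∧ G.att (G.ι h) = some v ∧ h ≠ G.ι h).card / 2

/-- An outer vertex: at most one incident non-leg edge. -/
def IsOuterVertex (G : MGraph) (v : ℕ) : Prop :=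
  v ∈ G.V ∧ G.nonLegEdgeCount v ≤ 1

/-- The corolla at `v`, as an embedded subgraph (vertex set and half-edges). -/
def corolla (G : MGraph) (v : ℕ) : Finset ℕ × Finset ℕ :=
  ({v}, G.H.filter fun h => G.att h = some v ∨ G.att (G.ι h) = some v)

/-- `G/b`: contract the (non-loop) inner edge `b`, merging its two endpoints
into the single vertex `min x y`. -/
def contract (G : MGraph) (b : ℕ) : MGraph :=
  let x := (G.att b).getD 0
  let y := (G.att (G.ι b)).getD 0
  let z := min x y
  let H' := G.H.filter fun h => h ≠ b ∧ h ≠ G.ι b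
  { V := insert z ((G.V.erase x).erase y)
    H := H'
    ι := fun h => if h ∈ H' then G.ι h else h
    att := fun h => if h ∈ H' then
        (if G.att h = some x ∨ G.att h = some y then some z else G.att h) else none }

/-- `G/v`: delete the (outer) vertex `v` together with its legs and loops;
edges joining `v` to other vertices become legs. -/
def delVertex (G : MGraph) (v : ℕ) : MGraph :=
  let H' := G.H.filter fun h =>
    ¬ ((G.att h = some v ∨ G.att (G.ι h) = some v) ∧
       (G.att h = some v ∨ G.att h = none) ∧
       (G.att (G.ι h) = some v ∨ G.att (G.ι h) = none))
  { V := G.V.erase v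
    H := H'
    ι := fun h => if h ∈ H' then G.ι h else h
    att := fun h => if h ∈ H' then (if G.att h = some v then none else G.att h) else none }

/-- `G/ℓ`: snip the loop (or cut the edge) `l` into two legs, with fresh
half-edges `a` and `b` as the new free ends. -/
def snip (G : MGraph) (l a b : ℕ) : MGraph :=
  let H' := insert a (insert b G.H)
  { V := G.V
    H := H'
    ι := fun h => if h ∈ H' then
        (if h = l then a else if h = a then l else
         if h = G.ι l then b else if h = b then G.ι l else G.ι h) else h
    att := fun h => if h ∈ H' then (if h = a ∨ h = b then none else G.att h) else none }

/-- `G_b`: subdivide the edge `b` by one new bivalent vertex `u`,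
splitting `b` into the two edges `{b, n₁}` and `{n₂, ι b}`. -/
def subdiv (G : MGraph) (b u n₁ n₂ : ℕ) : MGraph :=
  let H' := insert n₁ (insert n₂ G.H)
  { V := insert u G.V
    H := H'
    ι := fun h => if h ∈ H' then
        (if h = b then n₁ else if h = n₁ then b else
         if h = n₂ then (if G.ι b = b then n₂ else G.ι b) else
         if h = G.ι b then n₂ else G.ι h) else h
    att := fun h => if h ∈ H' then (if h = n₁ ∨ h = n₂ then some u else G.att h) else none }

/-- Validity of the data of a subdivision: `b` is an edge and the new names are fresh. -/
def IsDegen (G : MGraph) (b u n₁ n₂ : ℕ) : Prop :=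
  b ∈ G.H ∧ u ∉ G.V ∧ n₁ ∉ G.H ∧ n₂ ∉ G.H ∧ n₁ ≠ n₂

end MGraph

/-- The data of a graphical map: a map on half-edges (inducing the map `f₀` on
edges) and, for each vertex, an embedded subgraph of the target
(its vertex set together with its set of half-edges). -/
structure PreGMap where
  e : ℕ → ℕ
  vimg : ℕ → Finset ℕ × Finset ℕ

/-- Composition of graphical maps: compose on edges; the embedded subgraph at a
vertex is assembled by substituting the images of the vertices of its image. -/
def PreGMap.comp (g f : PreGMap) : PreGMap where
  e := g.e ∘ f.e
  vimg := fun v =>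
    ((f.vimg v).1.biUnion fun w => (g.vimg w).1,
     (f.vimg v).2.image g.e ∪ (f.vimg v).1.biUnion fun w => (g.vimg w).2)

/-- Equality of graphical maps out of `G` (extensional equality of `f₀` and `f₁`). -/
def PreGMap.EqOn (G : MGraph) (f g : PreGMap) : Prop :=
  (∀ h ∈ G.H, f.e h = g.e h) ∧ ∀ v ∈ G.V, f.vimg v = g.vimg v

namespace MGraph

/-- The identity graphical map of `G`. -/
def idMap (G : MGraph) : PreGMap := ⟨id, G.corolla⟩

/-- The inner coface map `δ^b : G/b → G`: identity on edges, sending the merged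
vertex to the embedded barbell subgraph of `G` around `b`, and every other
vertex to its corolla. -/
def innerCoface (G : MGraph) (b : ℕ) : PreGMap :=
  let x := (G.att b).getD 0
  let y := (G.att (G.ι b)).getD 0
  { e := id
    vimg := fun v => if v = min x y then
        ({x, y}, G.H.filter fun h =>
          G.att h = some x ∨ G.att h = some y ∨
          G.att (G.ι h) = some x ∨ G.att (G.ι h) = some y)
      else G.corolla v }

/-- The outer coface map `δ^v : G/v → G`: identity on edges, every vertex to its corolla. -/
def outerCoface (G : MGraph) (_v : ℕ) : PreGMap := ⟨id, G.corolla⟩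

/-- The cosnip map `δ^ℓ : G/ℓ → G`: both new legs are sent to the loop `l`,
identity on vertices. -/
def cosnip (G : MGraph) (l a b : ℕ) : PreGMap :=
  { e := fun h => if h = a then G.ι l else if h = b then l else h
    vimg := G.corolla }

/-- The codegeneracy map `σ^b : G_b → G`: the two halves of the subdivided edge
are sent to `b`, the new bivalent vertex to the edge graph `η_b`, and every
other vertex to its corolla. -/
def codegeneracy (G : MGraph) (b u n₁ n₂ : ℕ) : PreGMap :=
  { e := fun h => if h = n₁ then G.ι b else if h = n₂ then b else h
    vimg := fun v => if v = u then ((∅ : Finset ℕ), ({b, G.ι b} : Finset ℕ))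
      else G.corolla v }

/-- The conditions for `f` to be a graphical map `G → G'`: it maps edges to
edges, each vertex to an embedded subgraph of `G'`, the vertex sets of the
images are disjoint and together exhaust the vertices of `G'`, and boundaries
match: each half-edge at `v` is sent into the subgraph at `v`. -/
def IsGMap (G G' : MGraph) (f : PreGMap) : Prop :=
  (∀ h ∈ G.H, f.e h ∈ G'.H ∧ (f.e (G.ι h) = f.e h ∨ f.e (G.ι h) = G'.ι (f.e h))) ∧
  (∀ v ∈ G.V, (f.vimg v).1 ⊆ G'.V ∧ (f.vimg v).2 ⊆ G'.H) ∧
  (∀ v ∈ G.V, ∀ w ∈ G.V, v ≠ w → Disjoint (f.vimg v).1 (f.vimg w).1) ∧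
  G.V.biUnion (fun v => (f.vimg v).1) = G'.V ∧
  (∀ v ∈ G.V, ∀ h ∈ G.H, G.att h = some v → f.e h ∈ (f.vimg v).2)

end MGraph

/-- The three kinds of coface maps: inner cofaces, outer cofaces, and cosnips. -/
inductive CofaceKind where
  | inner (e : ℕ)
  | outer (v : ℕ)
  | snip (l a b : ℕ)

namespace MGraph

/-- The source of the coface map of kind `k` into `G`. -/
def cofaceSource (G : MGraph) : CofaceKind → MGraph
  | .inner e => G.contract e
  | .outer v => G.delVertex v
  | .snip l a b => G.snip l a b

/-- The coface map of kind `k` into `G`. -/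
def cofaceMap (G : MGraph) : CofaceKind → PreGMap
  | .inner e => G.innerCoface e
  | .outer v => G.outerCoface v
  | .snip l a b => G.cosnip l a b

/-- Validity of a coface map into `G`: inner cofaces contract non-loop inner
edges, outer cofaces delete outer vertices, cosnips snip loops (with fresh
names, leaving the graph connected). -/
def IsCoface (G : MGraph) : CofaceKind → Prop
  | .inner e => G.IsInnerEdge e ∧ ¬ G.IsLoop e
  | .outer v => G.IsOuterVertex v
  | .snip l a b => G.IsLoop l ∧ a ∉ G.H ∧ b ∉ G.H ∧ a ≠ b ∧ (G.snip l a b).Connected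

end MGraph

/-- `CofaceSeq G₁ G₂ f`: `f : G₁ → G₂` is a composite of a sequence of coface maps. -/
inductive CofaceSeq : MGraph → MGraph → PreGMap → Prop where
  | nil (G : MGraph) : CofaceSeq G G G.idMap
  | cons {G₁ G₂ : MGraph} {f : PreGMap} (k : CofaceKind) (hk : G₂.IsCoface k)
      (h : CofaceSeq G₁ (G₂.cofaceSource k) f) :
      CofaceSeq G₁ G₂ ((G₂.cofaceMap k).comp f)

/-- `DegenSeq G₁ G₂ f`: `f : G₁ → G₂` is a composite of a sequence of codegeneracy maps. -/
inductive DegenSeq : MGraph → MGraph → PreGMap → Prop where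
  | nil (G : MGraph) : DegenSeq G G G.idMap
  | cons {G₁ G₂ : MGraph} {f : PreGMap} (b u n₁ n₂ : ℕ) (hb : G₂.IsDegen b u n₁ n₂)
      (h : DegenSeq G₁ (G₂.subdiv b u n₁ n₂) f) :
      DegenSeq G₁ G₂ ((G₂.codegeneracy b u n₁ n₂).comp f)

/-- `ElemSeq G₁ G₂ f`: `f : G₁ → G₂` is an arbitrary composite of coface and
codegeneracy maps. -/
inductive ElemSeq : MGraph → MGraph → PreGMap → Prop where
  | nil (G : MGraph) : ElemSeq G G G.idMap
  | coface {G₁ G₂ : MGraph} {f : PreGMap} (k : CofaceKind) (hk : G₂.IsCoface k)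
      (h : ElemSeq G₁ (G₂.cofaceSource k) f) :
      ElemSeq G₁ G₂ ((G₂.cofaceMap k).comp f)
  | degen {G₁ G₂ : MGraph} {f : PreGMap} (b u n₁ n₂ : ℕ) (hb : G₂.IsDegen b u n₁ n₂)
      (h : ElemSeq G₁ (G₂.subdiv b u n₁ n₂) f) :
      ElemSeq G₁ G₂ ((G₂.codegeneracy b u n₁ n₂).comp f)

/-! Snipping `ℓ` changes `G` only at the two halves of `ℓ`: they become halves of two legs at
`v`, whose other halves are the fresh free ends `a` and `b`. A half of a leg at `v` is not a
non-leg edge at `v`, is deleted together with `v`, and lies in no corolla other than that of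
`v`; in `G` the two halves of the loop are deleted together with `v` as well. Away from these
four half-edges `G/ℓ` and `G` agree and the cosnip map is the identity. -/

attribute [ext] MGraph

namespace MGraph

def IsDeletedWith (G : MGraph) (v h : ℕ) : Prop :=
  (G.att h = some v ∨ G.att (G.ι h) = some v) ∧
  (G.att h = some v ∨ G.att h = none) ∧
  (G.att (G.ι h) = some v ∨ G.att (G.ι h) = none)

/-- `h` is one half of a leg at `v` whose other half is free. -/
def IsLegHalfAt (G : MGraph) (v h : ℕ) : Prop :=
  (G.att h = some v ∧ G.att (G.ι h) = none) ∨ (G.att h = none ∧ G.att (G.ι h) = some v)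

section

variable {G G' : MGraph} {v h : ℕ}

theorem mem_delVertex_H : h ∈ (G.delVertex v).H ↔ h ∈ G.H ∧ ¬ G.IsDeletedWith v h :=
  Finset.mem_filter

theorem isDeletedWith_of_loop (hh : G.att h = some v) (hιh : G.att (G.ι h) = some v) :
    G.IsDeletedWith v h :=
  ⟨Or.inl hh, Or.inl hh, Or.inl hιh⟩

theorem IsLegHalfAt.isDeletedWith (hh : G.IsLegHalfAt v h) : G.IsDeletedWith v h := by
  rcases hh with ⟨h1, h2⟩ | ⟨h1, h2⟩
  · exact ⟨Or.inl h1, Or.inl h1, Or.inr h2⟩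
  · exact ⟨Or.inr h2, Or.inr h1, Or.inl h2⟩

theorem IsLegHalfAt.not_mem_corolla {w : ℕ} (hh : G.IsLegHalfAt v h) (hw : w ≠ v) :
    h ∉ (G.corolla w).2 := by
  simp only [corolla, Finset.mem_filter, not_and, not_or]
  rintro -
  rcases hh with ⟨h1, h2⟩ | ⟨h1, h2⟩ <;> simp [h1, h2, Ne.symm hw]

theorem delVertex_eq_of_H_eq (hV : G.V = G'.V) (hH : (G.delVertex v).H = (G'.delVertex v).H)
    (hagree : ∀ h ∈ (G.delVertex v).H, G.ι h = G'.ι h ∧ G.att h = G'.att h) :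
    G.delVertex v = G'.delVertex v := by
  refine MGraph.ext (by simp only [delVertex, hV]) hH ?_ ?_ <;> funext h
  · show (if h ∈ (G.delVertex v).H then _ else _) = (if h ∈ (G'.delVertex v).H then _ else _)
    rw [← hH]
    by_cases hh : h ∈ (G.delVertex v).H
    · rw [if_pos hh, if_pos hh, (hagree h hh).1]
    · rw [if_neg hh, if_neg hh]
  · show (if h ∈ (G.delVertex v).H then _ else _) = (if h ∈ (G'.delVertex v).H then _ else _)
    rw [← hH]
    by_cases hh : h ∈ (G.delVertex v).H
    · rw [if_pos hh, if_pos hh, (hagree h hh).2]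
    · rw [if_neg hh, if_neg hh]

theorem nonLegEdgeCount_le
    (hsub : ∀ h ∈ G'.H, G'.att h = some v → (G'.att (G'.ι h)).isSome →
      h ∈ G.H ∧ G'.ι h = G.ι h ∧ G'.att h = G.att h ∧ G'.att (G'.ι h) = G.att (G.ι h)) :
    G'.nonLegEdgeCount v ≤ G.nonLegEdgeCount v := by
  unfold nonLegEdgeCount
  gcongr
  · intro h hh
    simp only [Finset.mem_filter] at hh ⊢
    obtain ⟨hmem, hv, hsome, hne⟩ := hh
    obtain ⟨hG, -, hatt, hιatt⟩ := hsub h hmem hv hsome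
    exact ⟨hG, hatt ▸ hv, hιatt ▸ hsome, hιatt ▸ hne⟩
  · intro h hh
    simp only [Finset.mem_filter] at hh ⊢
    obtain ⟨hmem, hv, hιv, hne⟩ := hh
    obtain ⟨hG, hι, hatt, hιatt⟩ := hsub h hmem hv (by simp [hιv])
    exact ⟨hG, hatt ▸ hv, hιatt ▸ hιv, hι ▸ hne⟩

end

section Snip

variable {G : MGraph} {l a b v h : ℕ}

theorem mem_snip_H : h ∈ (G.snip l a b).H ↔ h = a ∨ h = b ∨ h ∈ G.H := by
  simp [snip]

theorem snip_att_of_mem (ha : a ∉ G.H) (hb : b ∉ G.H) (hh : h ∈ G.H) :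
    (G.snip l a b).att h = G.att h := by
  have : h ≠ a ∧ h ≠ b := ⟨by rintro rfl; exact ha hh, by rintro rfl; exact hb hh⟩
  simp [snip, hh, this]

theorem snip_ι_of_mem (ha : a ∉ G.H) (hb : b ∉ G.H) (hh : h ∈ G.H) (hl : h ≠ l)
    (hιl : h ≠ G.ι l) : (G.snip l a b).ι h = G.ι h := by
  have : h ≠ a ∧ h ≠ b := ⟨by rintro rfl; exact ha hh, by rintro rfl; exact hb hh⟩
  simp [snip, hh, hl, hιl, this]

theorem cosnip_e_of_mem (ha : a ∉ G.H) (hb : b ∉ G.H) (hh : h ∈ G.H) :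
    (G.cosnip l a b).e h = h := by
  have : h ≠ a ∧ h ≠ b := ⟨by rintro rfl; exact ha hh, by rintro rfl; exact hb hh⟩
  simp [cosnip, this]

theorem snip_agree_of_ne_loop (hιH : ∀ h ∈ G.H, G.ι h ∈ G.H) (ha : a ∉ G.H) (hb : b ∉ G.H) (hh : h ∈ G.H)
    (hl : h ≠ l) (hιl : h ≠ G.ι l) :
    (G.snip l a b).ι h = G.ι h ∧ (G.snip l a b).att h = G.att h ∧
      (G.snip l a b).att ((G.snip l a b).ι h) = G.att (G.ι h) := by
  rw [snip_ι_of_mem ha hb hh hl hιl]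
  exact ⟨rfl, snip_att_of_mem ha hb hh, snip_att_of_mem ha hb (hιH h hh)⟩

theorem snip_att_left : (G.snip l a b).att a = none := by simp [snip]

theorem snip_att_right : (G.snip l a b).att b = none := by simp [snip]

theorem snip_ι_loop (hlH : l ∈ G.H) : (G.snip l a b).ι l = a := by simp [snip, hlH]

theorem snip_ι_left (hal : a ≠ l) : (G.snip l a b).ι a = l := by simp [snip, hal]

theorem snip_ι_ι_loop (hιlH : G.ι l ∈ G.H) (hιl : G.ι l ≠ l) (haι : a ≠ G.ι l) :
    (G.snip l a b).ι (G.ι l) = b := by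
  simp [snip, hιlH, hιl, Ne.symm haι]

theorem snip_ι_right (hbl : b ≠ l) (hbι : b ≠ G.ι l) :
    (G.snip l a b).ι b = if b = a then l else G.ι l := by
  simp [snip, hbl, hbι]

/-- Snipping a loop at `v` turns its two halves into two legs at `v`, freed at `a` and `b`. -/
theorem snip_isLegHalfAt (hl : G.IsLoop l) (hlv : G.att l = some v)
    (hιlH : G.ι l ∈ G.H) (ha : a ∉ G.H) (hb : b ∉ G.H) (hh : h ∈ (G.snip l a b).H)
    (haway : ¬ (h ∈ G.H ∧ h ≠ l ∧ h ≠ G.ι l)) : (G.snip l a b).IsLegHalfAt v h := by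
  obtain ⟨hlH, hlι, w, hw, hιw⟩ := hl
  obtain rfl : w = v := Option.some_injective _ (hw.symm.trans hlv)
  have hal : a ≠ l := by rintro rfl; exact ha hlH
  have hbl : b ≠ l := by rintro rfl; exact hb hlH
  have haι : a ≠ G.ι l := by rintro rfl; exact ha hιlH
  have hbι : b ≠ G.ι l := by rintro rfl; exact hb hιlH
  have hlatt : (G.snip l a b).att l = some w := (snip_att_of_mem ha hb hlH).trans hw
  have hιlatt : (G.snip l a b).att (G.ι l) = some w := (snip_att_of_mem ha hb hιlH).trans hιw
  rcases mem_snip_H.1 hh with rfl | rfl | hG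
  · exact Or.inr ⟨snip_att_left, by rw [snip_ι_left hal, hlatt]⟩
  · refine Or.inr ⟨snip_att_right, ?_⟩
    rw [snip_ι_right hbl hbι]
    split_ifs <;> assumption
  · obtain rfl | rfl : h = l ∨ h = G.ι l := by tauto
    · exact Or.inl ⟨hlatt, by rw [snip_ι_loop hlH, snip_att_left]⟩
    · exact Or.inl ⟨hιlatt, by rw [snip_ι_ι_loop hιlH (Ne.symm hlι) haι, snip_att_right]⟩

end Snip

section LoopAtOuterVertex

variable {G : MGraph} {l a b v : ℕ}

theorem snip_isOuterVertex (hιH : ∀ h ∈ G.H, G.ι h ∈ G.H) (hl : G.IsLoop l)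
    (hlv : G.att l = some v) (ha : a ∉ G.H) (hb : b ∉ G.H) (hv : G.IsOuterVertex v) :
    (G.snip l a b).IsOuterVertex v := by
  refine ⟨hv.1, le_trans (nonLegEdgeCount_le fun h hh hhv hιh => ?_) hv.2⟩
  by_cases haway : h ∈ G.H ∧ h ≠ l ∧ h ≠ G.ι l
  · obtain ⟨hG, hl, hιl⟩ := haway
    exact ⟨hG, snip_agree_of_ne_loop hιH ha hb hG hl hιl⟩
  · exfalso
    rcases snip_isLegHalfAt hl hlv (hιH l hl.1) ha hb hh haway with ⟨-, h2⟩ | ⟨h1, -⟩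
    · simp [h2] at hιh
    · simp [h1] at hhv

theorem ne_loop_of_mem_delVertex_H (hιι : G.ι (G.ι l) = l) (hl : G.IsLoop l)
    (hlv : G.att l = some v) {h : ℕ} (hh : h ∈ (G.delVertex v).H) :
    h ∈ G.H ∧ h ≠ l ∧ h ≠ G.ι l := by
  obtain ⟨-, -, w, hw, hιw⟩ := hl
  obtain rfl : w = v := Option.some_injective _ (hw.symm.trans hlv)
  obtain ⟨hG, hdel⟩ := mem_delVertex_H.1 hh
  refine ⟨hG, ?_, ?_⟩ <;> rintro rfl
  · exact hdel (isDeletedWith_of_loop hw hιw)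
  · exact hdel (isDeletedWith_of_loop hιw (hιι.symm ▸ hw))

theorem snip_delVertex (hιH : ∀ h ∈ G.H, G.ι h ∈ G.H) (hιι : G.ι (G.ι l) = l)
    (hl : G.IsLoop l) (hlv : G.att l = some v) (ha : a ∉ G.H) (hb : b ∉ G.H) :
    (G.snip l a b).delVertex v = G.delVertex v := by
  have hH : ((G.snip l a b).delVertex v).H = (G.delVertex v).H := by
    ext h
    simp only [mem_delVertex_H]
    constructor
    · rintro ⟨hh, hdel⟩
      by_cases haway : h ∈ G.H ∧ h ≠ l ∧ h ≠ G.ι l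
      · obtain ⟨hG, hl, hιl⟩ := haway
        obtain ⟨-, hatt, hιatt⟩ := snip_agree_of_ne_loop hιH ha hb hG hl hιl
        exact ⟨hG, by rwa [IsDeletedWith, hatt, hιatt] at hdel⟩
      · exact absurd (snip_isLegHalfAt hl hlv (hιH l hl.1) ha hb hh haway).isDeletedWith hdel
    · intro hh
      obtain ⟨hG, hl, hιl⟩ := ne_loop_of_mem_delVertex_H hιι hl hlv (mem_delVertex_H.2 hh)
      obtain ⟨-, hatt, hιatt⟩ := snip_agree_of_ne_loop hιH ha hb hG hl hιl
      exact ⟨mem_snip_H.2 (Or.inr (Or.inr hG)), by rw [IsDeletedWith, hatt, hιatt]; exact hh.2⟩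
  refine delVertex_eq_of_H_eq rfl hH fun h hh => ?_
  obtain ⟨hG, hl, hιl⟩ := ne_loop_of_mem_delVertex_H hιι hl hlv (hH ▸ hh)
  obtain ⟨hι, hatt, -⟩ := snip_agree_of_ne_loop hιH ha hb hG hl hιl
  exact ⟨hι, hatt⟩

theorem cosnip_comp_outerCoface_vimg (hιH : ∀ h ∈ G.H, G.ι h ∈ G.H) (hl : G.IsLoop l)
    (hlv : G.att l = some v) (ha : a ∉ G.H) (hb : b ∉ G.H) {w : ℕ} (hw : w ≠ v) :
    ((G.cosnip l a b).comp ((G.snip l a b).outerCoface v)).vimg w = G.corolla w := by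
  have himage : ((G.snip l a b).corolla w).2.image (G.cosnip l a b).e ⊆ (G.corolla w).2 := by
    intro h' hh'
    obtain ⟨h, hh, rfl⟩ := Finset.mem_image.1 hh'
    have hhS : h ∈ (G.snip l a b).H := (Finset.mem_filter.1 hh).1
    by_cases haway : h ∈ G.H ∧ h ≠ l ∧ h ≠ G.ι l
    · obtain ⟨hG, hl, hιl⟩ := haway
      obtain ⟨-, hatt, hιatt⟩ := snip_agree_of_ne_loop hιH ha hb hG hl hιl
      rw [cosnip_e_of_mem ha hb hG]
      simp only [corolla, Finset.mem_filter, hatt, hιatt] at hh ⊢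
      exact ⟨hG, hh.2⟩
    · exact absurd hh ((snip_isLegHalfAt hl hlv (hιH l hl.1) ha hb hhS haway).not_mem_corolla hw)
  show (({w} : Finset ℕ).biUnion fun x => (G.corolla x).1,
    ((G.snip l a b).corolla w).2.image (G.cosnip l a b).e ∪
      ({w} : Finset ℕ).biUnion fun x => (G.corolla x).2) = G.corolla w
  rw [Finset.singleton_biUnion, Finset.singleton_biUnion, Finset.union_eq_right.2 himage]

end LoopAtOuterVertex

end MGraph

theorem cosnip_outer_triangle_general (G : MGraph) (hG : G.Wf) (v ℓ a b : ℕ)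
    (hv : G.IsOuterVertex v) (hℓ : G.IsLoop ℓ) (hℓv : G.att ℓ = some v)
    (ha : a ∉ G.H) (hb : b ∉ G.H) :
    (G.snip ℓ a b).IsOuterVertex v ∧
    (G.snip ℓ a b).delVertex v = G.delVertex v ∧
    PreGMap.EqOn (G.delVertex v)
      ((G.cosnip ℓ a b).comp ((G.snip ℓ a b).outerCoface v))
      (G.outerCoface v) ∧
    (∀ h ∈ (G.delVertex v).H,
      ((G.cosnip ℓ a b).comp ((G.snip ℓ a b).outerCoface v)).e h = h) ∧
    (∀ w ∈ (G.delVertex v).V,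
      ((G.cosnip ℓ a b).comp ((G.snip ℓ a b).outerCoface v)).vimg w
        = G.corolla w) := by
  obtain ⟨hιH, hιι, -, -⟩ := hG
  have hedges : ∀ h ∈ (G.delVertex v).H,
      ((G.cosnip ℓ a b).comp ((G.snip ℓ a b).outerCoface v)).e h = h := fun h hh =>
    MGraph.cosnip_e_of_mem ha hb (MGraph.mem_delVertex_H.1 hh).1
  have hvertices : ∀ w ∈ (G.delVertex v).V,
      ((G.cosnip ℓ a b).comp ((G.snip ℓ a b).outerCoface v)).vimg w = G.corolla w :=
    fun w hw => MGraph.cosnip_comp_outerCoface_vimg hιH hℓ hℓv ha hb (Finset.ne_of_mem_erase hw)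
  exact ⟨MGraph.snip_isOuterVertex hιH hℓ hℓv ha hb hv,
    MGraph.snip_delVertex hιH (hιι ℓ hℓ.1) hℓ hℓv ha hb,
    ⟨hedges, hvertices⟩, hedges, hvertices⟩

/-- Let `v` be an outer vertex of `G` carrying a loop `ℓ`.
Then `v` is still an outer vertex of `G/ℓ`, the graphs `(G/ℓ)/v` and `G/v`
agree, and the triangle commutes: `δ^ℓ ∘ δ^v = δ^v` as graphical maps
`G/v → G`.  Moreover this composite graphical map is the inclusion on both
edges and vertices. -/
theorem cosnip_outer_triangle (G : MGraph) (hG : G.Wf) (v ℓ a b : ℕ)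
    (hv : G.IsOuterVertex v) (hℓ : G.IsLoop ℓ) (hℓv : G.att ℓ = some v)
    (ha : a ∉ G.H) (hb : b ∉ G.H) (hab : a ≠ b) :
    (G.snip ℓ a b).IsOuterVertex v ∧
    (G.snip ℓ a b).delVertex v = G.delVertex v ∧
    PreGMap.EqOn (G.delVertex v)
      ((G.cosnip ℓ a b).comp ((G.snip ℓ a b).outerCoface v))
      (G.outerCoface v) ∧
    (∀ h ∈ (G.delVertex v).H,
      ((G.cosnip ℓ a b).comp ((G.snip ℓ a b).outerCoface v)).e h = h) ∧
    (∀ w ∈ (G.delVertex v).V,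
      ((G.cosnip ℓ a b).comp ((G.snip ℓ a b).outerCoface v)).vimg w
        = G.corolla w) :=
  cosnip_outer_triangle_general G hG v ℓ a b hv hℓ hℓv ha hb
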